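/- arXiv:2401.10470 — 5 statements merged into one kernel-verified Lean document; each statement's English description precedes it below -/
import Mathlib

section
/- Let q ≥ 2 be an integer and let m be a positive integer. Let g be the (m+1)×(m+1) real matrix defined in the context. Then g² = q^m · I_{m+1}, where I_{m+1} is the identity matrix of size m+1. In particular, when m is even, (q^{-m/2}·g)² = I_{m+1}. -/
/-!
Let `P` be the upper triangular matrix of ones and `K` the antidiagonal matrix with
`K j k = x ^ k` for `j + k = m`. The partial row sums of `g` telescope:
`∑_{t ≤ k} g s t = x ^ k` if `s + k ≤ m` and `0` otherwise, which is also `(P * K) s k`.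
Hence `g * P = P * K`, i.e. `g` is conjugate to `K`; since `K * K = x ^ m • 1`,
also `g * g = x ^ m • 1`.
-/

open Finset

namespace NRT

variable {R : Type*} [CommRing R]

def macWilliamsEntry (x : R) (m s t : ℕ) : R :=
  if t = 0 then 1
  else if s + t ≤ m then x ^ (t - 1) * (x - 1)
  else if s + t = m + 1 then -x ^ (t - 1)
  else 0

def macWilliams (x : R) (m : ℕ) : Matrix (Fin (m + 1)) (Fin (m + 1)) R :=
  Matrix.of fun s t => macWilliamsEntry x m s t

def upperOnes (n : ℕ) : Matrix (Fin n) (Fin n) R :=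
  Matrix.of fun i j => if i ≤ j then 1 else 0

def antidiagPow (x : R) (m : ℕ) : Matrix (Fin (m + 1)) (Fin (m + 1)) R :=
  Matrix.of fun j k => if j.val + k.val = m then x ^ k.val else 0

theorem sum_range_macWilliamsEntry (x : R) {m s : ℕ} (hs : s ≤ m) (k : ℕ) :
    ∑ t ∈ range (k + 1), macWilliamsEntry x m s t = if s + k ≤ m then x ^ k else 0 := by
  induction k with
  | zero => simp [macWilliamsEntry, hs]
  | succ k ih =>
    rw [sum_range_succ, ih]
    simp only [macWilliamsEntry, Nat.succ_ne_zero, if_false, Nat.add_sub_cancel]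
    split_ifs <;> first | omega | ring

theorem macWilliams_mul_upperOnes_apply (x : R) (m : ℕ) (s k : Fin (m + 1)) :
    (macWilliams x m * upperOnes (m + 1) : Matrix (Fin (m + 1)) (Fin (m + 1)) R) s k =
      ∑ t ∈ range (k.val + 1), macWilliamsEntry x m s t := by
  have hfilter : (range (m + 1)).filter (· ≤ k.val) = range (k.val + 1) := by
    ext t
    simp only [mem_filter, mem_range]
    omega
  simp only [Matrix.mul_apply, macWilliams, upperOnes, Matrix.of_apply, mul_ite, mul_one, mul_zero,
    Fin.le_def]
  rw [Fin.sum_univ_eq_sum_range (fun t => if t ≤ k.val then macWilliamsEntry x m s t else 0),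
    ← sum_filter, hfilter]

theorem antidiagPow_apply_eq_ite_rev (x : R) {m : ℕ} (j k : Fin (m + 1)) :
    antidiagPow x m j k = if j = k.rev then x ^ k.val else 0 := by
  simp only [antidiagPow, Matrix.of_apply, Fin.ext_iff, Fin.val_rev]
  congr 1
  apply propext
  omega

theorem upperOnes_mul_antidiagPow_apply (x : R) (m : ℕ) (s k : Fin (m + 1)) :
    (upperOnes (m + 1) * antidiagPow x m : Matrix (Fin (m + 1)) (Fin (m + 1)) R) s k =
      if s.val + k.val ≤ m then x ^ k.val else 0 := by
  simp only [Matrix.mul_apply, antidiagPow_apply_eq_ite_rev, mul_ite, mul_zero, sum_ite_eq',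
    mem_univ, if_true, upperOnes, Matrix.of_apply, ite_mul, one_mul, zero_mul, Fin.le_def,
    Fin.val_rev]
  congr 1
  apply propext
  omega

theorem macWilliams_mul_upperOnes (x : R) (m : ℕ) :
    macWilliams x m * upperOnes (m + 1) = upperOnes (m + 1) * antidiagPow x m := by
  ext s k
  rw [macWilliams_mul_upperOnes_apply, sum_range_macWilliamsEntry x (Nat.lt_succ_iff.1 s.isLt),
    upperOnes_mul_antidiagPow_apply]

theorem antidiagPow_mul_self (x : R) (m : ℕ) :
    antidiagPow x m * antidiagPow x m = x ^ m • 1 := by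
  ext i k
  simp only [Matrix.mul_apply, antidiagPow_apply_eq_ite_rev, ite_mul, zero_mul, sum_ite_eq',
    mem_univ, if_true, Matrix.smul_apply, Matrix.one_apply, smul_eq_mul, mul_ite, mul_one,
    mul_zero, Fin.rev_rev]
  rw [← pow_add, Fin.val_rev, show m + 1 - (k + 1) + k = m by omega]

theorem isUnit_upperOnes (n : ℕ) : IsUnit (upperOnes n : Matrix (Fin n) (Fin n) R) := by
  rw [Matrix.isUnit_iff_isUnit_det, Matrix.det_of_isUpperTriangular]
  · simp [upperOnes]
  · intro i j hij
    simp [upperOnes, not_le.2 (show j < i from hij)]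

theorem macWilliams_mul_self (x : R) (m : ℕ) : macWilliams x m * macWilliams x m = x ^ m • 1 := by
  have hconj := macWilliams_mul_upperOnes x m
  rw [← (isUnit_upperOnes (m + 1)).mul_left_inj]
  calc macWilliams x m * macWilliams x m * upperOnes (m + 1)
      = upperOnes (m + 1) * (antidiagPow x m * antidiagPow x m) := by
        rw [Matrix.mul_assoc, hconj, ← Matrix.mul_assoc, hconj, Matrix.mul_assoc]
    _ = x ^ m • 1 * upperOnes (m + 1) := by
        rw [antidiagPow_mul_self, Matrix.mul_smul, Matrix.smul_mul, Matrix.mul_one, Matrix.one_mul]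

end NRT

/-- The (m+1)×(m+1) real matrix `g` from the MacWilliams identity for NRT codes:
`g s t = 1` if `t = 0`; `q^(t-1)(q-1)` if `0 < t ≤ m - s`; `-q^(t-1)` if `t + s = m + 1`;
and `0` if `t + s > m + 1`. -/
def gMat (q m : ℕ) : Matrix (Fin (m + 1)) (Fin (m + 1)) ℝ := fun s t =>
  if t.val = 0 then 1
  else if s.val + t.val ≤ m then (q : ℝ) ^ (t.val - 1) * ((q : ℝ) - 1)
  else if s.val + t.val = m + 1 then -(q : ℝ) ^ (t.val - 1)
  else 0

theorem gMat_sq_general (q m : ℕ) (hq : 2 ≤ q) :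
    gMat q m * gMat q m = (q : ℝ) ^ m • (1 : Matrix (Fin (m + 1)) (Fin (m + 1)) ℝ) ∧
    (Even m →
      (((q : ℝ) ^ (m / 2))⁻¹ • gMat q m) * (((q : ℝ) ^ (m / 2))⁻¹ • gMat q m) = 1) := by
  have hsq : gMat q m * gMat q m = (q : ℝ) ^ m • 1 := NRT.macWilliams_mul_self (q : ℝ) m
  refine ⟨hsq, fun ⟨k, hk⟩ => ?_⟩
  have hqk : (q : ℝ) ^ k ≠ 0 := by positivity
  rw [smul_mul_smul_comm, hsq, smul_smul, show m / 2 = k by omega, hk, pow_add, ← mul_inv,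
    inv_mul_cancel₀ (mul_ne_zero hqk hqk), one_smul]

/-- `g² = q^m · I`, and in particular, when `m` is even, `(q^{-m/2} • g)² = I`. -/
theorem gMat_sq (q m : ℕ) (hq : 2 ≤ q) (hm : 0 < m) :
    gMat q m * gMat q m = (q : ℝ) ^ m • (1 : Matrix (Fin (m + 1)) (Fin (m + 1)) ℝ) ∧
    (Even m →
      (((q : ℝ) ^ (m / 2))⁻¹ • gMat q m) * (((q : ℝ) ^ (m / 2))⁻¹ • gMat q m) = 1) :=
  gMat_sq_general q m hq
end

section
/- Let q be a prime power, let m be a positive even integer, let n be a positive integer, and let C be a self-dual NRT code in M_{n,m}(F_q). Let g be the (m+1)×(m+1) real matrix defined in the context and let H_C ∈ ℂ[x_0,x_1,…,x_m] be the shape enumerator of C. Then H_C(x) = H_C(q^{-m/2}·g·x), i.e., H_C is unchanged under the linear substitution of variables x_s ↦ Σ_{t=0}^{m} q^{-m/2} g_{st} x_t. -/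
open MvPolynomial

/-- The NRT weight of a row vector: `ρ(v) = max {j : v_j ≠ 0}` (1-indexed), `0` for `v = 0`. -/
def nrtRho {m : ℕ} {F : Type*} [Field F] [DecidableEq F] (v : Fin m → F) : ℕ :=
  (Finset.univ.filter fun j => v j ≠ 0).sup fun j => j.val + 1

/-- The NRT inner product `⟨A,B⟩ = Σ_i Σ_j a_{ij} b_{i,m-j+1}`. -/
def nrtInner {n m : ℕ} {F : Type*} [Field F] (A B : Matrix (Fin n) (Fin m) F) : F :=
  ∑ i, ∑ j, A i j * B i j.rev

/-- The dual code of an NRT code with respect to the NRT inner product. -/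
def dualCode {n m : ℕ} {F : Type*} [Field F]
    (C : Submodule F (Matrix (Fin n) (Fin m) F)) :
    Submodule F (Matrix (Fin n) (Fin m) F) where
  carrier := {A | ∀ B ∈ C, nrtInner A B = 0}
  add_mem' := by
    intro a b ha hb B hB
    simp only [nrtInner, Matrix.add_apply, add_mul, Finset.sum_add_distrib] at *
    rw [ha B hB, hb B hB, add_zero]
  zero_mem' := by
    intro B hB
    simp [nrtInner]
  smul_mem' := by
    intro c a ha B hB
    simp only [nrtInner, Matrix.smul_apply, smul_eq_mul, mul_assoc, ← Finset.mul_sum] at *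
    rw [ha B hB, mul_zero]

/-- The number of rows of `A` whose NRT weight is exactly `j` (for `j = 0,1,…,m`). -/
def shapeCount {n m : ℕ} {F : Type*} [Field F] [DecidableEq F]
    (A : Matrix (Fin n) (Fin m) F) (j : Fin (m + 1)) : ℕ :=
  (Finset.univ.filter fun i : Fin n => nrtRho (A i) = j.val).card

open Classical in
/-- The shape enumerator `H_C = Σ_{A ∈ C} x_0^{e_0(A)} x_1^{e_1(A)} ⋯ x_m^{e_m(A)}`. -/
noncomputable def shapeEnum {n m : ℕ} {F : Type*} [Field F] [Fintype F] [DecidableEq F]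
    (C : Submodule F (Matrix (Fin n) (Fin m) F)) : MvPolynomial (Fin (m + 1)) ℂ :=
  ∑ A : C, ∏ j : Fin (m + 1), X j ^ shapeCount (A : Matrix (Fin n) (Fin m) F) j

/-- Substitution of variables `x_s ↦ Σ_t A_{st} x_t` as an algebra endomorphism. -/
noncomputable def substAlg {ι : Type*} [Fintype ι] {k : Type*} [CommSemiring k]
    (A : Matrix ι ι k) : MvPolynomial ι k →ₐ[k] MvPolynomial ι k :=
  aeval fun s => ∑ t, A s t • X t

/-!
Fix a primitive additive character `ψ : F_q → ℂ`. For a row `w` of weight `s`, the rows of weight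
at most `t` form the coordinate subspace `F_q^t × 0`, over which `v ↦ ψ ⟨v, w⟩` sums to `q^t` if
`s + t ≤ m` and to `0` otherwise; differencing in `t`, the sum over the rows of weight exactly `t`
is `g_{st}`. Since `ψ ⟨A, B⟩` factors over the rows,
`Σ_A ψ ⟨A, B⟩ x^{shape A} = Π_i Σ_t g_{ρ(B_i), t} x_t`, and summing over `B ∈ C` with character
orthogonality gives the MacWilliams identity `|C| · H_{C^⊤}(x) = H_C(g x)`. A self-dual `C` has
dimension `nm/2`, so `|C| = q^{nm/2}`, which is exactly the factor that `q^{-m/2}` contributes to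
the degree-`n` polynomial `H_C`.
-/

open Finset

lemma AddChar.map_sum_eq_prod {A M ι : Type*} [AddCommMonoid A] [CommMonoid M]
    (ψ : AddChar A M) (s : Finset ι) (f : ι → A) :
    ψ (∑ i ∈ s, f i) = ∏ i ∈ s, ψ (f i) := by
  induction s using Finset.cons_induction with
  | empty => simp
  | cons a s ha ih => rw [sum_cons, prod_cons, AddChar.map_add_eq_mul, ih]

lemma AddChar.IsPrimitive.sum_apply_linearMap {F V R : Type*} [Field F] [AddCommGroup V]
    [Module F V] [Fintype V] [CommRing R] [IsDomain R] {ψ : AddChar F R} (hψ : ψ.IsPrimitive)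
    (f : V →ₗ[F] F) [Decidable (f = 0)] :
    ∑ v, ψ (f v) = if f = 0 then (Fintype.card V : R) else 0 := by
  have htriv : ψ.compAddMonoidHom f.toAddMonoidHom = 0 ↔ f = 0 := by
    refine ⟨fun h => ?_, fun h => by ext; simp [h]⟩
    by_contra hf
    obtain ⟨v, hv⟩ : ∃ v, f v ≠ 0 := by simpa [LinearMap.ext_iff] using hf
    obtain ⟨x, hx⟩ := AddChar.ne_one_iff.1 (hψ hv)
    apply hx
    simpa [mul_comm] using DFunLike.congr_fun h (x • v)
  have hsum := (ψ.compAddMonoidHom f.toAddMonoidHom).sum_eq_ite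
  simp only [htriv] at hsum
  exact hsum

lemma gMat_eq_sub (q m : ℕ) (s t : Fin (m + 1)) (ht : t ≠ 0) :
    gMat q m s t = (if (s + t : ℕ) ≤ m then (q : ℝ) ^ (t : ℕ) else 0)
      - (if (s + (t - 1) : ℕ) ≤ m then (q : ℝ) ^ ((t : ℕ) - 1) else 0) := by
  obtain ⟨k, hk⟩ : ∃ k, (t : ℕ) = k + 1 :=
    Nat.exists_eq_succ_of_ne_zero (Fin.val_ne_zero_iff.2 ht)
  simp only [gMat, hk, Nat.add_one_ne_zero, ↓reduceIte, Nat.add_sub_cancel]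
  split_ifs <;> first | omega | ring

section NRTWeight

variable {F : Type*} [Field F] [DecidableEq F] {m : ℕ}

lemma nrtRho_le_iff {r : ℕ} (v : Fin m → F) :
    nrtRho v ≤ r ↔ ∀ j : Fin m, r ≤ j → v j = 0 := by
  simp only [nrtRho, Finset.sup_le_iff, mem_filter, mem_univ, true_and]
  exact forall_congr' fun j => by rw [not_imp_comm, not_le, Nat.lt_succ_iff]

lemma nrtRho_le (v : Fin m → F) : nrtRho v ≤ m :=
  Finset.sup_le fun j _ => j.isLt

def nrtRhoFin (v : Fin m → F) : Fin (m + 1) := ⟨nrtRho v, Nat.lt_succ_of_le (nrtRho_le v)⟩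

@[simp] lemma val_nrtRhoFin (v : Fin m → F) : (nrtRhoFin v : ℕ) = nrtRho v := rfl

lemma nrtRho_add_le_iff (w : Fin m → F) {r : ℕ} (hr : r ≤ m) :
    nrtRho w + r ≤ m ↔ ∀ j : Fin m, (j : ℕ) < r → w j.rev = 0 := by
  rw [← Nat.le_sub_iff_add_le hr, nrtRho_le_iff, ← Fin.revPerm.forall_congr_right]
  refine forall_congr' fun j => ?_
  simp only [Fin.revPerm_apply, Fin.val_rev]
  constructor <;> intro h hj <;> apply h <;> omega

end NRTWeight

section NRTForm

variable {F : Type*} [Field F] {n m : ℕ}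

lemma nrtInner_comm (A B : Matrix (Fin n) (Fin m) F) : nrtInner A B = nrtInner B A :=
  sum_congr rfl fun _ _ => Fintype.sum_equiv Fin.revPerm _ _ fun j => by simp [mul_comm]

lemma nrtInner_single (A : Matrix (Fin n) (Fin m) F) (i : Fin n) (j : Fin m) :
    nrtInner A (Matrix.single i j.rev 1) = A i j := by
  simp [nrtInner, Matrix.single_apply, ite_and]

variable (F n m) in
def nrtForm : LinearMap.BilinForm F (Matrix (Fin n) (Fin m) F) :=
  LinearMap.mk₂ F nrtInner
    (fun A A' B => by simp [nrtInner, add_mul, sum_add_distrib])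
    (fun c A B => by simp [nrtInner, mul_sum, mul_assoc])
    (fun A B B' => by simp [nrtInner, mul_add, sum_add_distrib])
    (fun c A B => by simp [nrtInner, mul_sum, mul_left_comm])

@[simp] lemma nrtForm_apply (A B : Matrix (Fin n) (Fin m) F) :
    nrtForm F n m A B = nrtInner A B := rfl

lemma nrtForm_isRefl : LinearMap.IsRefl (nrtForm F n m) := fun A B h => by
  rwa [nrtForm_apply, nrtInner_comm]

lemma nrtForm_nondegenerate : (nrtForm F n m).Nondegenerate := by
  refine nrtForm_isRefl.nondegenerate_iff_separatingLeft.2 fun A hA => ?_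
  ext i j
  simpa [nrtInner_single] using hA (Matrix.single i j.rev 1)

lemma dualCode_eq_orthogonal (C : Submodule F (Matrix (Fin n) (Fin m) F)) :
    dualCode C = (nrtForm F n m).orthogonal C := by
  ext A
  rw [LinearMap.BilinForm.mem_orthogonal_iff]
  exact forall₂_congr fun B _ => by rw [nrtForm_apply, nrtInner_comm]

lemma finrank_dualCode (C : Submodule F (Matrix (Fin n) (Fin m) F)) :
    Module.finrank F (dualCode C) = n * m - Module.finrank F C := by
  rw [dualCode_eq_orthogonal, LinearMap.BilinForm.finrank_orthogonal nrtForm_nondegenerate,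
    Module.finrank_matrix, Module.finrank_self, Fintype.card_fin, Fintype.card_fin, mul_one]

lemma finrank_eq_of_selfDual (C : Submodule F (Matrix (Fin n) (Fin m) F)) (hm : Even m)
    (hC : C = dualCode C) : Module.finrank F C = n * (m / 2) := by
  have h := finrank_dualCode C
  rw [← hC] at h
  obtain ⟨k, hk⟩ := hm
  have hnm : n * m = n * k + n * k := by rw [hk, mul_add]
  rw [show m / 2 = k by omega]
  omega

end NRTForm

section RowCharacterSums

variable {F : Type*} [Field F] [Fintype F] [DecidableEq F] {m : ℕ} {ψ : AddChar F ℂ}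

lemma sum_addChar_nrtRho_le (hψ : ψ.IsPrimitive) (w : Fin m → F) {r : ℕ} (hr : r ≤ m) :
    ∑ v ∈ univ.filter (fun v : Fin m → F => nrtRho v ≤ r), ψ (∑ j, v j * w j.rev)
      = if nrtRho w + r ≤ m then (Fintype.card F : ℂ) ^ r else 0 := by
  have hfilter : univ.filter (fun v : Fin m → F => nrtRho v ≤ r) =
      Fintype.piFinset fun j : Fin m => if (j : ℕ) < r then univ else {0} := by
    ext v
    simp only [mem_filter, mem_univ, true_and, Fintype.mem_piFinset, nrtRho_le_iff]
    refine forall_congr' fun j => ?_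
    split_ifs with hj <;> simp <;> omega
  simp_rw [hfilter, AddChar.map_sum_eq_prod]
  rw [← prod_univ_sum (fun j : Fin m => if (j : ℕ) < r then univ else {0})
    fun j x => ψ (x * w j.rev)]
  calc ∏ j : Fin m, ∑ x ∈ (if (j : ℕ) < r then univ else {0}), ψ (x * w j.rev)
      = ∏ j ∈ univ.filter (fun j : Fin m => (j : ℕ) < r),
          if w j.rev = 0 then (Fintype.card F : ℂ) else 0 := by
        rw [prod_filter]
        refine prod_congr rfl fun j _ => ?_
        by_cases hj : (j : ℕ) < r <;> simp [hj, AddChar.sum_mulShift _ hψ]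
    _ = _ := by
        rw [prod_ite_zero, prod_const, Fin.card_filter_val_lt, min_eq_right hr]
        simp [nrtRho_add_le_iff w hr]

lemma sum_addChar_nrtRho_eq (hψ : ψ.IsPrimitive) (w : Fin m → F) (t : Fin (m + 1)) :
    ∑ v ∈ univ.filter (fun v : Fin m → F => nrtRho v = t), ψ (∑ j, v j * w j.rev)
      = (gMat (Fintype.card F) m (nrtRhoFin w) t : ℂ) := by
  by_cases ht : t = 0
  · simp only [ht, Fin.val_zero, ← Nat.le_zero]
    rw [sum_addChar_nrtRho_le hψ w (Nat.zero_le m)]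
    simp [gMat, nrtRho_le]
  · have hsplit : ∀ v : Fin m → F, (if nrtRho v = t then ψ (∑ j, v j * w j.rev) else 0)
        = (if nrtRho v ≤ t then ψ (∑ j, v j * w j.rev) else 0)
          - (if nrtRho v ≤ (t : ℕ) - 1 then ψ (∑ j, v j * w j.rev) else 0) := by
      have := Fin.val_ne_zero_iff.2 ht
      intro v; split_ifs <;> first | omega | simp
    rw [sum_filter, sum_congr rfl fun v _ => hsplit v, sum_sub_distrib, ← sum_filter,
      ← sum_filter, sum_addChar_nrtRho_le hψ w (Nat.le_of_lt_succ t.isLt),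
      sum_addChar_nrtRho_le hψ w (by omega), gMat_eq_sub _ _ _ _ ht]
    rw [Complex.ofReal_sub]
    split_ifs <;> simp only [val_nrtRhoFin] at * <;> first | omega | simp

lemma sum_addChar_smul_X_nrtRhoFin (hψ : ψ.IsPrimitive) (w : Fin m → F) :
    ∑ v : Fin m → F, ψ (∑ j, v j * w j.rev) • (X (nrtRhoFin v) : MvPolynomial (Fin (m + 1)) ℂ)
      = ∑ t, (gMat (Fintype.card F) m (nrtRhoFin w) t : ℂ) • X t := by
  rw [← sum_fiberwise univ nrtRhoFin]
  refine sum_congr rfl fun t _ => ?_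
  rw [sum_congr rfl fun v hv => by rw [(mem_filter.1 hv).2], ← sum_smul,
    ← sum_addChar_nrtRho_eq hψ w t]
  congr 2
  ext v
  simp [Fin.ext_iff]

end RowCharacterSums

section ShapeEnumerator

variable {F : Type*} [Field F] [DecidableEq F] {n m : ℕ}

noncomputable def shapeMonomial (A : Matrix (Fin n) (Fin m) F) : MvPolynomial (Fin (m + 1)) ℂ :=
  ∏ i, X (nrtRhoFin (A i))

lemma prod_X_pow_shapeCount (A : Matrix (Fin n) (Fin m) F) :
    ∏ j, (X j : MvPolynomial (Fin (m + 1)) ℂ) ^ shapeCount A j = shapeMonomial A := by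
  rw [shapeMonomial, ← prod_fiberwise univ (fun i => nrtRhoFin (A i))]
  refine prod_congr rfl fun j _ => ?_
  rw [prod_congr rfl fun i hi => by rw [(mem_filter.1 hi).2], prod_const, shapeCount]
  congr 2
  ext i
  simp [Fin.ext_iff]

open Classical in
lemma shapeEnum_eq_sum_shapeMonomial [Fintype F] (C : Submodule F (Matrix (Fin n) (Fin m) F)) :
    shapeEnum C = ∑ A : C, shapeMonomial (A : Matrix (Fin n) (Fin m) F) :=
  sum_congr rfl fun _ _ => prod_X_pow_shapeCount _

lemma substAlg_shapeMonomial (M : Matrix (Fin (m + 1)) (Fin (m + 1)) ℂ)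
    (A : Matrix (Fin n) (Fin m) F) :
    substAlg M (shapeMonomial A) = ∏ i, ∑ t, M (nrtRhoFin (A i)) t • X t := by
  simp [substAlg, shapeMonomial]

lemma substAlg_smul_shapeMonomial (c : ℂ) (M : Matrix (Fin (m + 1)) (Fin (m + 1)) ℂ)
    (A : Matrix (Fin n) (Fin m) F) :
    substAlg (c • M) (shapeMonomial A) = c ^ n • substAlg M (shapeMonomial A) := by
  simp_rw [substAlg_shapeMonomial, Matrix.smul_apply, smul_assoc, ← smul_sum]
  rw [← smul_prod, card_univ, Fintype.card_fin]

lemma substAlg_smul_shapeEnum [Fintype F] (c : ℂ) (M : Matrix (Fin (m + 1)) (Fin (m + 1)) ℂ)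
    (C : Submodule F (Matrix (Fin n) (Fin m) F)) :
    substAlg (c • M) (shapeEnum C) = c ^ n • substAlg M (shapeEnum C) := by
  simp_rw [shapeEnum_eq_sum_shapeMonomial, map_sum, substAlg_smul_shapeMonomial, smul_sum]

end ShapeEnumerator

section MacWilliams

variable {F : Type*} [Field F] {n m : ℕ} {ψ : AddChar F ℂ}

lemma sum_addChar_nrtInner_smul_shapeMonomial [Fintype F] [DecidableEq F] (hψ : ψ.IsPrimitive)
    (B : Matrix (Fin n) (Fin m) F) :
    ∑ A : Matrix (Fin n) (Fin m) F, ψ (nrtInner A B) • shapeMonomial A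
      = substAlg ((gMat (Fintype.card F) m).map (fun x : ℝ => (x : ℂ))) (shapeMonomial B) := by
  have hrow : ∀ A : Matrix (Fin n) (Fin m) F, ψ (nrtInner A B) • shapeMonomial A
      = ∏ i, ψ (∑ j, A i j * B i j.rev) • (X (nrtRhoFin (A i)) : MvPolynomial _ ℂ) := by
    intro A
    rw [prod_smul, nrtInner, AddChar.map_sum_eq_prod, shapeMonomial]
  calc ∑ A : Matrix (Fin n) (Fin m) F, ψ (nrtInner A B) • shapeMonomial A
      = ∑ A : Fin n → Fin m → F,
          ∏ i, ψ (∑ j, A i j * B i j.rev) • (X (nrtRhoFin (A i)) : MvPolynomial _ ℂ) :=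
        Fintype.sum_equiv Matrix.of.symm _ _ hrow
    _ = ∏ i, ∑ v : Fin m → F, ψ (∑ j, v j * B i j.rev) • (X (nrtRhoFin v) : MvPolynomial _ ℂ) :=
        (Fintype.prod_sum fun i (v : Fin m → F) =>
          ψ (∑ j, v j * B i j.rev) • (X (nrtRhoFin v) : MvPolynomial _ ℂ)).symm
    _ = _ := by
        simp_rw [sum_addChar_smul_X_nrtRhoFin hψ, substAlg_shapeMonomial, Matrix.map_apply]

lemma sum_addChar_nrtInner (hψ : ψ.IsPrimitive) (C : Submodule F (Matrix (Fin n) (Fin m) F))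
    [Fintype C] [DecidablePred (· ∈ dualCode C)] (A : Matrix (Fin n) (Fin m) F) :
    ∑ B : C, ψ (nrtInner A B) = if A ∈ dualCode C then (Fintype.card C : ℂ) else 0 := by
  classical
  have hdual : (nrtForm F n m A).domRestrict C = 0 ↔ A ∈ dualCode C := by
    simp [LinearMap.ext_iff, dualCode]
  have h := hψ.sum_apply_linearMap ((nrtForm F n m A).domRestrict C)
  simp only [hdual] at h
  exact h

theorem card_smul_shapeEnum_dualCode [Fintype F] [DecidableEq F]
    (C : Submodule F (Matrix (Fin n) (Fin m) F)) :
    (Nat.card C : ℂ) • shapeEnum (dualCode C)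
      = substAlg ((gMat (Fintype.card F) m).map (fun x : ℝ => (x : ℂ))) (shapeEnum C) := by
  classical
  have hψ := AddChar.FiniteField.primitiveChar_to_Complex_isPrimitive F
  set ψ := AddChar.FiniteField.primitiveChar_to_Complex F
  calc (Nat.card C : ℂ) • shapeEnum (dualCode C)
      = ∑ A : Matrix (Fin n) (Fin m) F, (∑ B : C, ψ (nrtInner A B)) • shapeMonomial A := by
        simp_rw [sum_addChar_nrtInner hψ, ite_smul, zero_smul]
        rw [← sum_filter, shapeEnum_eq_sum_shapeMonomial, smul_sum, Nat.card_eq_fintype_card]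
        exact (sum_subtype _ (by simp) fun A => (Fintype.card C : ℂ) • shapeMonomial A).symm
    _ = ∑ B : C, ∑ A : Matrix (Fin n) (Fin m) F, ψ (nrtInner A B) • shapeMonomial A := by
        simp_rw [sum_smul]
        exact sum_comm
    _ = _ := by
        simp_rw [sum_addChar_nrtInner_smul_shapeMonomial hψ, shapeEnum_eq_sum_shapeMonomial,
          map_sum]

end MacWilliams

theorem shapeEnum_selfDual_invariant_general {F : Type*} [Field F] [Fintype F] [DecidableEq F]
    (m n : ℕ) (hme : Even m)
    (C : Submodule F (Matrix (Fin n) (Fin m) F)) (hC : C = dualCode C) :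
    shapeEnum C =
      substAlg (((((Fintype.card F : ℝ)) ^ (m / 2))⁻¹ • gMat (Fintype.card F) m).map
        (fun x : ℝ => (x : ℂ))) (shapeEnum C) := by
  set q := Fintype.card F
  have hq : (q : ℂ) ≠ 0 := Nat.cast_ne_zero.2 Fintype.card_ne_zero
  have hcard : Nat.card C = q ^ (n * (m / 2)) := by
    rw [Module.natCard_eq_pow_finrank (K := F), finrank_eq_of_selfDual C hme hC,
      Nat.card_eq_fintype_card]
  have hscale : ((((q : ℝ)) ^ (m / 2))⁻¹ • gMat q m).map (fun x : ℝ => (x : ℂ))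
      = ((q : ℂ) ^ (m / 2))⁻¹ • (gMat q m).map (fun x : ℝ => (x : ℂ)) := by
    ext s t
    simp
  have hunit : ((q : ℂ) ^ (m / 2))⁻¹ ^ n * ((q ^ (n * (m / 2)) : ℕ) : ℂ) = 1 := by
    rw [Nat.cast_pow, mul_comm n, pow_mul, ← mul_pow, inv_mul_cancel₀ (pow_ne_zero _ hq), one_pow]
  rw [hscale, substAlg_smul_shapeEnum, ← card_smul_shapeEnum_dualCode, ← hC, hcard, smul_smul,
    hunit, one_smul]

/-- MacWilliams invariance for self-dual NRT codes: if `C = C^⊤` in `M_{n,m}(F_q)` with `m`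
even, then the shape enumerator of `C` satisfies `H_C(x) = H_C(q^{-m/2}·g·x)`. -/
theorem shapeEnum_selfDual_invariant {F : Type*} [Field F] [Fintype F] [DecidableEq F]
    (m n : ℕ) (hm : 0 < m) (hme : Even m) (hn : 0 < n)
    (C : Submodule F (Matrix (Fin n) (Fin m) F)) (hC : C = dualCode C) :
    shapeEnum C =
      substAlg (((((Fintype.card F : ℝ)) ^ (m / 2))⁻¹ • gMat (Fintype.card F) m).map
        (fun x : ℝ => (x : ℂ))) (shapeEnum C) :=
  shapeEnum_selfDual_invariant_general m n hme C hC
end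

section
/- Let q ≥ 2 be an integer, let m be a positive even integer, let g be the (m+1)×(m+1) real matrix defined in the context, and set σ := q^{-m/2}·g. Then there exists an invertible real (m+1)×(m+1) matrix T such that σ = T⁻¹ · diag(1,…,1,−1,…,−1) · T, where the diagonal matrix has m/2+1 entries equal to 1 followed by m/2 entries equal to −1. -/
/-!
Row `s` of `g` is the sequence of differences of `k ↦ q^k · [s + k ≤ m]`, so its partial sums
telescope; against the columns of `g`, which are constant up to the anti-diagonal, this gives
`g * g = q^m • 1`. For even `m` the diagonal of `g` telescopes to `trace g = q^(m/2)`. Hence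
`σ = q^(-m/2) • g` is an involution of trace `1`, and an involution is diagonalised by a basis
adapted to its `±1`-eigenspaces, whose dimensions `m/2 + 1` and `m/2` are fixed by the trace.
-/

open Module Matrix Finset

-- `gMat` read on `ℕ × ℕ`, so that sums over `Fin (m + 1)` become sums over `range (m + 1)`.
def gEntry (q m s t : ℕ) : ℝ :=
  if t = 0 then 1
  else if s + t ≤ m then (q : ℝ) ^ (t - 1) * ((q : ℝ) - 1)
  else if s + t = m + 1 then -(q : ℝ) ^ (t - 1)
  else 0

section gEntry
variable {q m : ℕ}

lemma gEntry_succ (s t : ℕ) :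
    gEntry q m s (t + 1) =
      (if s + (t + 1) ≤ m then (q : ℝ) ^ (t + 1) else 0) -
        if s + t ≤ m then (q : ℝ) ^ t else 0 := by
  simp only [gEntry, Nat.add_one_ne_zero, if_false, Nat.add_sub_cancel]
  split_ifs <;> first | omega | ring

lemma sum_range_gEntry {s : ℕ} (hs : s ≤ m) (k : ℕ) :
    ∑ t ∈ range (k + 1), gEntry q m s t = if s + k ≤ m then (q : ℝ) ^ k else 0 := by
  rw [sum_range_succ', sum_congr rfl fun t _ => gEntry_succ s t,
    sum_range_sub (fun k => if s + k ≤ m then (q : ℝ) ^ k else 0)]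
  simp [gEntry, hs]

lemma sum_gEntry_mul_gEntry_zero {s : ℕ} (hs : s ≤ m) :
    ∑ t ∈ range (m + 1), gEntry q m s t * gEntry q m t 0 =
      if s = 0 then (q : ℝ) ^ m else 0 := by
  have h : ∀ t, gEntry q m t 0 = 1 := fun t => if_pos rfl
  simp only [h, mul_one, sum_range_gEntry hs]
  split_ifs <;> first | rfl | omega

lemma sum_gEntry_mul_gEntry_succ {s j r : ℕ} (hs : s ≤ m) (hm : r + j + 1 = m) :
    ∑ t ∈ range (m + 1), gEntry q m s t * gEntry q m t (j + 1) =
      if s = j + 1 then (q : ℝ) ^ m else 0 := by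
  subst hm
  have col_low :
      ∀ t ∈ range (r + 1), gEntry q (r + j + 1) t (j + 1) = (q : ℝ) ^ j * (q - 1) := by
    intro t ht
    simp only [mem_range] at ht
    simp only [gEntry, Nat.add_one_ne_zero, if_false, Nat.add_sub_cancel,
      if_pos (by omega : t + (j + 1) ≤ r + j + 1)]
  have col_mid : gEntry q (r + j + 1) (r + 1) (j + 1) = -(q : ℝ) ^ j := by
    simp only [gEntry, Nat.add_one_ne_zero, if_false, Nat.add_sub_cancel,
      if_neg (by omega : ¬ r + 1 + (j + 1) ≤ r + j + 1),
      if_pos (by omega : r + 1 + (j + 1) = r + j + 1 + 1)]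
  have col_high : ∀ x, gEntry q (r + j + 1) (r + 1 + 1 + x) (j + 1) = 0 := by
    intro x
    simp only [gEntry, Nat.add_one_ne_zero, if_false,
      if_neg (by omega : ¬ r + 1 + 1 + x + (j + 1) ≤ r + j + 1),
      if_neg (by omega : ¬ r + 1 + 1 + x + (j + 1) = r + j + 1 + 1)]
  rw [show r + j + 1 + 1 = r + 1 + 1 + j by ring, sum_range_add, sum_range_succ,
    sum_congr rfl fun t ht => by rw [col_low t ht], ← sum_mul, sum_range_gEntry hs, col_mid,
    gEntry_succ]
  simp only [col_high, mul_zero, sum_const_zero, add_zero]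
  split_ifs <;> first | omega | ring

lemma sum_range_gEntry_diag {k : ℕ} (hk : k + k ≤ m) :
    ∑ s ∈ range (k + 1), gEntry q m s s = (q : ℝ) ^ k := by
  have diag_succ :
      ∀ s ∈ range k, gEntry q m (s + 1) (s + 1) = (q : ℝ) ^ (s + 1) - (q : ℝ) ^ s := by
    intro s hs
    simp only [mem_range] at hs
    simp only [gEntry, Nat.add_one_ne_zero, if_false, Nat.add_sub_cancel,
      if_pos (by omega : s + 1 + (s + 1) ≤ m)]
    ring
  rw [sum_range_succ', sum_congr rfl diag_succ, sum_range_sub (fun s => (q : ℝ) ^ s)]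
  simp [gEntry]

lemma gEntry_diag_of_lt {k s : ℕ} (hm : m = k + k) (hs : k < s) : gEntry q m s s = 0 := by
  simp only [gEntry, if_neg (by omega : ¬ s = 0), if_neg (by omega : ¬ s + s ≤ m),
    if_neg (by omega : ¬ s + s = m + 1)]

end gEntry

theorem gMat_mul_self (q m : ℕ) : gMat q m * gMat q m = (q : ℝ) ^ m • 1 := by
  ext ⟨s, hs⟩ ⟨u, hu⟩
  rw [Matrix.mul_apply, Matrix.smul_apply, Matrix.one_apply]
  change ∑ t : Fin (m + 1), gEntry q m s t * gEntry q m t u = _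
  rw [Fin.sum_univ_eq_sum_range (fun t => gEntry q m s t * gEntry q m t u)]
  rcases u with _ | j
  · rw [sum_gEntry_mul_gEntry_zero (by omega)]
    simp [Fin.ext_iff]
  · rw [sum_gEntry_mul_gEntry_succ (r := m - j - 1) (by omega) (by omega)]
    simp [Fin.ext_iff]

theorem trace_gMat {q m : ℕ} (hm : Even m) : (gMat q m).trace = (q : ℝ) ^ (m / 2) := by
  obtain ⟨k, hk⟩ := hm
  change ∑ s : Fin (m + 1), gEntry q m s s = _
  rw [Fin.sum_univ_eq_sum_range (fun s => gEntry q m s s), show m + 1 = k + 1 + k by omega,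
    sum_range_add, sum_range_gEntry_diag (by omega), show m / 2 = k by omega,
    sum_eq_zero fun x _ => gEntry_diag_of_lt hk (by omega), add_zero]

namespace Module.End
variable {K V : Type*} [Field K] [AddCommGroup V] [Module K V] {f : End K V}

theorem isCompl_ker_sub_one_ker_add_one (hf : f * f = 1) (h2 : (2 : K) ≠ 0) :
    IsCompl (LinearMap.ker (f - 1)) (LinearMap.ker (f + 1)) := by
  have hff (x : V) : f (f x) = x := congrArg (· x) hf
  constructor
  · rw [Submodule.disjoint_def]
    intro x hx₁ hx₂
    simp only [LinearMap.mem_ker, LinearMap.sub_apply, LinearMap.add_apply, one_apply,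
      sub_eq_zero] at hx₁ hx₂
    have : (2 : K) • x = 0 := by rw [two_smul]; nth_rewrite 1 [← hx₁]; exact hx₂
    exact (smul_eq_zero.mp this).resolve_left h2
  · rw [codisjoint_iff, Submodule.eq_top_iff']
    intro x
    refine Submodule.mem_sup.mpr
      ⟨(2⁻¹ : K) • (x + f x), ?_, (2⁻¹ : K) • (x - f x), ?_, ?_⟩
    · simp [hff, add_comm]
    · simp [hff]
    · rw [← smul_add, add_add_sub_cancel, ← two_smul K, smul_smul, inv_mul_cancel₀ h2,
        one_smul]

theorem exists_basis_apply_eq_ite_smul [FiniteDimensional K V] {n : ℕ} (hn : finrank K V = n)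
    (hf : f * f = 1) (h2 : (2 : K) ≠ 0) :
    ∃ k ≤ n, ∃ b : Basis (Fin n) K V,
      ∀ i, f (b i) = (if i.val < k then 1 else -1 : K) • b i := by
  set E₁ := LinearMap.ker (f - 1)
  set E₂ := LinearMap.ker (f + 1)
  have hc := isCompl_ker_sub_one_ker_add_one hf h2
  have hdim : finrank K E₁ + finrank K E₂ = n := by
    rw [Submodule.finrank_add_eq_of_isCompl hc, hn]
  let e := finSumFinEquiv.trans (finCongr hdim)
  let b := (((finBasis K E₁).prod (finBasis K E₂)).map
    (Submodule.prodEquivOfIsCompl E₁ E₂ hc)).reindex e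
  refine ⟨finrank K E₁, by omega, b, fun i => ?_⟩
  obtain ⟨x, rfl⟩ := e.surjective i
  rcases x with j | j
  · have h := (finBasis K E₁ j).2
    simp only [E₁, LinearMap.mem_ker, LinearMap.sub_apply, one_apply, sub_eq_zero] at h
    simpa [b, e] using h
  · have h := (finBasis K E₂ j).2
    simp only [E₂, LinearMap.mem_ker, LinearMap.add_apply, one_apply,
      add_eq_zero_iff_eq_neg] at h
    simpa [b, e] using h

end Module.End

theorem Matrix.exists_isUnit_eq_inv_mul_diagonal_mul {R ι : Type*} [CommRing R] [Fintype ι]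
    [DecidableEq ι] {A : Matrix ι ι R} {d : ι → R} (b : Basis ι R (ι → R))
    (hb : ∀ i, A *ᵥ b i = d i • b i) :
    ∃ T : Matrix ι ι R, IsUnit T ∧ A = T⁻¹ * diagonal d * T := by
  set P := (Pi.basisFun R ι).toMatrix b
  set T := b.toMatrix (Pi.basisFun R ι)
  have hPT : P * T = 1 := Basis.toMatrix_mul_toMatrix_flip _ _
  have hAP : A * P = P * diagonal d := by
    ext i j
    rw [mul_diagonal]
    simpa [P, mul_apply, Basis.toMatrix_apply, mulVec, dotProduct, mul_comm] using
      congrFun (hb j) i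
  have := Basis.invertibleToMatrix b (Pi.basisFun R ι)
  refine ⟨T, isUnit_of_invertible T, ?_⟩
  rw [inv_eq_left_inv hPT, ← hAP, Matrix.mul_assoc, hPT, Matrix.mul_one]

theorem Matrix.trace_diagonal_ite_lt {K : Type*} [CommRing K] {n k : ℕ} (hk : k ≤ n) :
    (diagonal fun i : Fin n => if i.val < k then (1 : K) else -1).trace = 2 * k - n := by
  rw [trace_diagonal, Fin.sum_univ_eq_sum_range (fun i => if i < k then (1 : K) else -1),
    show n = k + (n - k) by omega, sum_range_add,
    sum_congr rfl fun i hi => if_pos (mem_range.mp hi),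
    sum_congr rfl fun i _ => if_neg (Nat.not_lt.mpr (Nat.le_add_right k i))]
  simp [Nat.cast_sub hk]
  ring

theorem Matrix.exists_isUnit_eq_inv_mul_diagonal_ite_mul_of_mul_self_eq_one {K : Type*} [Field K]
    [CharZero K] {n k : ℕ} {A : Matrix (Fin n) (Fin n) K} (hA : A * A = 1)
    (htr : A.trace = 2 * k - n) :
    ∃ T : Matrix (Fin n) (Fin n) K, IsUnit T ∧
      A = T⁻¹ * diagonal (fun i : Fin n => if i.val < k then 1 else -1) * T := by
  obtain ⟨k', hk', b, hb⟩ := End.exists_basis_apply_eq_ite_smul (f := toLin' A)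
    (finrank_fin_fun K) (by rw [End.mul_eq_comp, ← toLin'_mul, hA, toLin'_one]; rfl) two_ne_zero
  obtain ⟨T, hT, hAT⟩ := exists_isUnit_eq_inv_mul_diagonal_mul b fun i => by
    simpa only [toLin'_apply] using hb i
  obtain rfl : k' = k := by
    have htr' := trace_conj' hT (diagonal fun i : Fin n => if i.val < k' then (1 : K) else -1)
    rw [← hAT, htr, trace_diagonal_ite_lt hk'] at htr'
    exact_mod_cast (mul_left_cancel₀ (two_ne_zero (α := K)) (sub_left_inj.mp htr')).symm
  exact ⟨T, hT, hAT⟩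

theorem sigma_conjugate_diagonal_general (q m : ℕ) (hq : 2 ≤ q) (hme : Even m) :
    ∃ T : Matrix (Fin (m + 1)) (Fin (m + 1)) ℝ, IsUnit T ∧
      (((q : ℝ) ^ (m / 2))⁻¹ • gMat q m) =
        T⁻¹ * Matrix.diagonal (fun i : Fin (m + 1) =>
          if i.val ≤ m / 2 then (1 : ℝ) else -1) * T := by
  have hq₀ : (q : ℝ) ≠ 0 := Nat.cast_ne_zero.mpr (by omega)
  have hm : m / 2 + m / 2 = m := by obtain ⟨k, rfl⟩ := hme; omega
  set σ := ((q : ℝ) ^ (m / 2))⁻¹ • gMat q m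
  have hσ : σ * σ = 1 := by
    rw [smul_mul_smul_comm, gMat_mul_self, smul_smul, ← mul_inv, ← pow_add, hm,
      inv_mul_cancel₀ (pow_ne_zero _ hq₀), one_smul]
  have htr : σ.trace = 2 * ((m / 2 + 1 : ℕ) : ℝ) - (m + 1 : ℕ) := by
    rw [trace_smul, trace_gMat hme, smul_eq_mul, inv_mul_cancel₀ (pow_ne_zero _ hq₀)]
    push_cast
    linarith [(by exact_mod_cast hm : ((m / 2 : ℕ) : ℝ) + (m / 2 : ℕ) = m)]
  simp_rw [← Nat.lt_succ_iff]
  exact exists_isUnit_eq_inv_mul_diagonal_ite_mul_of_mul_self_eq_one hσ htr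

/-- For `m` even, `σ := q^{-m/2}·g` is conjugate (by an invertible real matrix `T`) to the
diagonal matrix `diag(1,…,1,−1,…,−1)` with `m/2+1` entries `1` and `m/2` entries `−1`. -/
theorem sigma_conjugate_diagonal (q m : ℕ) (hq : 2 ≤ q) (hm : 0 < m) (hme : Even m) :
    ∃ T : Matrix (Fin (m + 1)) (Fin (m + 1)) ℝ, IsUnit T ∧
      (((q : ℝ) ^ (m / 2))⁻¹ • gMat q m) =
        T⁻¹ * Matrix.diagonal (fun i : Fin (m + 1) =>
          if i.val ≤ m / 2 then (1 : ℝ) else -1) * T :=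
  sigma_conjugate_diagonal_general q m hq hme
end

section
/- Let τ := diag(1,−1,1) and σ := (1/2)·[[1,1,2],[1,1,−2],[1,−1,0]], and let G be the subgroup of GL_3(ℚ) generated by τ and σ, acting on ℂ[x_0,x_1,x_2] by linear substitution of variables. Set f_1 := x_0 + x_2, f_2 := x_0² + x_1² + 2x_2², f_3 := x_0³ + 3x_0x_2² + 3x_1²x_2 + x_2³. Then the invariant ring ℂ[x_0,x_1,x_2]^G equals the ℂ-subalgebra generated by {f_1, f_2, f_3}. -/
/-!
Substituting `x ↦ N x` with `N = conjMat` conjugates `τ` and `σ` to the permutation matrices of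
the transpositions `(1 2)` and `(0 1)`, so `p` is `G`-invariant exactly when `p(N x)` is symmetric.
By the fundamental theorem on symmetric polynomials the invariant ring is therefore the image of
`ℂ[e₁, e₂, e₃]` under the inverse substitution by `M = conjMatInv`, and `M` sends `e₁, e₂, 3e₃` to
`f₁, f₁² - f₂, f₁³ - 3f₁f₂ + 2f₃`, an invertible triangular change of generators.
-/

open MvPolynomial

/-- The matrix `τ = diag(1,−1,1)`. -/
def tauQ : Matrix (Fin 3) (Fin 3) ℚ := !![1, 0, 0; 0, -1, 0; 0, 0, 1]

/-- The matrix `σ = (1/2)·[[1,1,2],[1,1,−2],[1,−1,0]]`. -/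
def sigmaQ : Matrix (Fin 3) (Fin 3) ℚ := (1 / 2 : ℚ) • !![1, 1, 2; 1, 1, -2; 1, -1, 0]

/-- The subgroup `G ≤ GL_3(ℚ)` generated by `τ` and `σ`. -/
def grpG : Subgroup (Matrix (Fin 3) (Fin 3) ℚ)ˣ :=
  Subgroup.closure
    {u : (Matrix (Fin 3) (Fin 3) ℚ)ˣ |
      (u : Matrix (Fin 3) (Fin 3) ℚ) = tauQ ∨ (u : Matrix (Fin 3) (Fin 3) ℚ) = sigmaQ}

noncomputable def f1 : MvPolynomial (Fin 3) ℂ := X 0 + X 2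
noncomputable def f2 : MvPolynomial (Fin 3) ℂ := X 0 ^ 2 + X 1 ^ 2 + 2 * X 2 ^ 2
noncomputable def f3 : MvPolynomial (Fin 3) ℂ :=
  X 0 ^ 3 + 3 * X 0 * X 2 ^ 2 + 3 * X 1 ^ 2 * X 2 + X 2 ^ 3

section substAlg

variable {ι k : Type*} [Fintype ι] [CommSemiring k]

theorem substAlg_X (A : Matrix ι ι k) (s : ι) : substAlg A (X s) = ∑ t, A s t • X t :=
  aeval_X _ s

theorem substAlg_mul (A B : Matrix ι ι k) :
    substAlg (A * B) = (substAlg B).comp (substAlg A) := by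
  refine algHom_ext fun s => ?_
  simp only [AlgHom.comp_apply, substAlg_X, map_sum, map_smul, Finset.smul_sum, smul_smul,
    Matrix.mul_apply, Finset.sum_smul]
  exact Finset.sum_comm

theorem substAlg_substAlg (A B : Matrix ι ι k) (p : MvPolynomial ι k) :
    substAlg B (substAlg A p) = substAlg (A * B) p := by
  rw [substAlg_mul, AlgHom.comp_apply]

variable [DecidableEq ι]

@[simp]
theorem substAlg_one : substAlg (1 : Matrix ι ι k) = AlgHom.id k (MvPolynomial ι k) :=
  algHom_ext fun s => by simp [substAlg_X, Matrix.one_apply, ite_smul]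

theorem substAlg_permMatrix (π : Equiv.Perm ι) :
    substAlg (π.permMatrix k) = (rename π : MvPolynomial ι k →ₐ[k] MvPolynomial ι k) :=
  algHom_ext fun s => by simp [substAlg_X, PEquiv.toMatrix_apply, ite_smul]

theorem substAlg_leftInverse_of_mul_eq_one {M N : Matrix ι ι k} (h : N * M = 1) :
    Function.LeftInverse (substAlg M) (substAlg N) := fun p => by
  rw [substAlg_substAlg, h, substAlg_one, AlgHom.id_apply]

theorem substAlg_substAlg_eq_self_iff_of_mul_eq_mul {A B M N : Matrix ι ι k} (hNM : N * M = 1)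
    (hconj : N * B = A * N) (p : MvPolynomial ι k) :
    substAlg B (substAlg N p) = substAlg N p ↔ substAlg A p = p := by
  rw [substAlg_substAlg, hconj, ← substAlg_substAlg]
  exact (substAlg_leftInverse_of_mul_eq_one hNM).injective.eq_iff

theorem mem_map_substAlg_iff {M N : Matrix ι ι k} (hNM : N * M = 1) (hMN : M * N = 1)
    (S : Subalgebra k (MvPolynomial ι k)) (p : MvPolynomial ι k) :
    p ∈ S.map (substAlg M) ↔ substAlg N p ∈ S := by
  rw [Subalgebra.mem_map]
  refine ⟨?_, fun hp => ⟨_, hp, substAlg_leftInverse_of_mul_eq_one hNM p⟩⟩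
  rintro ⟨q, hq, rfl⟩
  rwa [substAlg_leftInverse_of_mul_eq_one hMN q]

end substAlg

theorem isSymmetric_iff_rename_swap_castSucc_succ {R : Type*} [CommSemiring R] {n : ℕ}
    (p : MvPolynomial (Fin (n + 1)) R) :
    p.IsSymmetric ↔ ∀ i : Fin n, rename (Equiv.swap i.castSucc i.succ) p = p := by
  refine ⟨fun h i => h _, fun h π => ?_⟩
  have hπ : π ∈ Submonoid.closure (Set.range fun i : Fin n => Equiv.swap i.castSucc i.succ) := by
    rw [Equiv.Perm.mclosure_swap_castSucc_succ]
    trivial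
  induction hπ using Submonoid.closure_induction with
  | mem _ hswap => obtain ⟨i, rfl⟩ := hswap; exact h i
  | one => simp
  | mul π₁ π₂ _ _ h₁ h₂ => rw [Equiv.Perm.coe_mul, ← rename_rename, h₂, h₁]

theorem symmetricSubalgebra_eq_adjoin_esymm {σ : Type*} (R : Type*) [Fintype σ] [CommRing R]
    {n : ℕ} (hn : Fintype.card σ = n) :
    symmetricSubalgebra σ R = Algebra.adjoin R (Set.range fun i : Fin n => esymm σ R (i + 1)) := by
  rw [Algebra.adjoin_range_eq_range_aeval]
  ext p
  rw [AlgHom.mem_range]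
  refine ⟨fun hp => ?_, ?_⟩
  · obtain ⟨q, hq⟩ := esymmAlgHom_surjective R hn.le ⟨p, hp⟩
    exact ⟨q, by rw [← esymmAlgHom_apply, hq]⟩
  · rintro ⟨q, rfl⟩
    simpa only [esymmAlgHom_apply] using (esymmAlgHom σ R _ q).2

section Invariants

variable {ι k K : Type*} [Fintype ι] [DecidableEq ι] [CommSemiring k] [CommSemiring K]

noncomputable def invariantSubalgebra (f : k →+* K) (G : Subgroup (Matrix ι ι k)ˣ) :
    Subalgebra K (MvPolynomial ι K) :=
  ⨅ u ∈ G, AlgHom.equalizer (substAlg ((u : Matrix ι ι k).map f)) (AlgHom.id K _)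

theorem mem_invariantSubalgebra_closure_iff (f : k →+* K) (S : Set (Matrix ι ι k)ˣ)
    (p : MvPolynomial ι K) :
    p ∈ invariantSubalgebra f (Subgroup.closure S) ↔
      ∀ u ∈ S, substAlg ((u : Matrix ι ι k).map f) p = p := by
  simp only [invariantSubalgebra, Algebra.mem_iInf, AlgHom.mem_equalizer, AlgHom.id_apply]
  refine ⟨fun h u hu => h u (Subgroup.subset_closure hu), fun h u hu => ?_⟩
  induction hu using Subgroup.closure_induction with
  | mem u hu => exact h u hu
  | one => simp
  | mul u v _ _ hu hv => rw [Units.val_mul, Matrix.map_mul, ← substAlg_substAlg, hu, hv]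
  | inv u _ hu =>
    conv_lhs => rw [← hu]
    rw [substAlg_substAlg, ← Matrix.map_mul, ← Units.val_mul, mul_inv_cancel, Units.val_one,
      Matrix.map_one _ f.map_zero f.map_one, substAlg_one, AlgHom.id_apply]

end Invariants

theorem algebraMap_inv_mul_ofNat_eq_one (R A : Type*) [Field R] [CharZero R] [Ring A]
    [Algebra R A] (n : ℕ) [n.AtLeastTwo] :
    algebraMap R A (OfNat.ofNat n)⁻¹ * (OfNat.ofNat n : A) = 1 := by
  rw [← map_ofNat (algebraMap R A) n, ← map_mul, inv_mul_cancel₀ (NeZero.ne _), map_one]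

theorem adjoin_triangular_eq {R A : Type*} [Field R] [CharZero R] [CommRing A]
    [Algebra R A] {a b c z : A} (h : 3 * z = a ^ 3 - 3 * a * b + 2 * c) :
    Algebra.adjoin R {a, a ^ 2 - b, z} = Algebra.adjoin R {a, b, c} := by
  have hz_eq : z = algebraMap R A 3⁻¹ * (a ^ 3 - 3 * a * b + 2 * c) := by
    linear_combination algebraMap R A 3⁻¹ * h - z * algebraMap_inv_mul_ofNat_eq_one R A 3
  have hc_eq : c = algebraMap R A 2⁻¹ * (3 * z - a ^ 3 + 3 * a * b) := by
    linear_combination (-algebraMap R A 2⁻¹) * h - c * algebraMap_inv_mul_ofNat_eq_one R A 2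
  apply le_antisymm <;> rw [Algebra.adjoin_le_iff]
  · have ha : a ∈ Algebra.adjoin R {a, b, c} := Algebra.subset_adjoin (by simp)
    have hb : b ∈ Algebra.adjoin R {a, b, c} := Algebra.subset_adjoin (by simp)
    have hc : c ∈ Algebra.adjoin R {a, b, c} := Algebra.subset_adjoin (by simp)
    rintro _ (rfl | rfl | rfl)
    · exact ha
    · exact sub_mem (pow_mem ha 2) hb
    · rw [hz_eq]
      exact mul_mem (Subalgebra.algebraMap_mem _ _) <| add_mem
        (sub_mem (pow_mem ha 3) (mul_mem (mul_mem (ofNat_mem _ 3) ha) hb))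
        (mul_mem (ofNat_mem _ 2) hc)
  · have ha : a ∈ Algebra.adjoin R {a, a ^ 2 - b, z} := Algebra.subset_adjoin (by simp)
    have hb : b ∈ Algebra.adjoin R {a, a ^ 2 - b, z} := by
      have := sub_mem (pow_mem ha 2) (Algebra.subset_adjoin (by simp) : a ^ 2 - b ∈ _)
      rwa [sub_sub_cancel] at this
    have hz : z ∈ Algebra.adjoin R {a, a ^ 2 - b, z} := Algebra.subset_adjoin (by simp)
    rintro _ (rfl | rfl | rfl)
    · exact ha
    · exact hb
    · rw [hc_eq]
      exact mul_mem (Subalgebra.algebraMap_mem _ _) <| add_mem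
        (sub_mem (mul_mem (ofNat_mem _ 3) hz) (pow_mem ha 3))
        (mul_mem (mul_mem (ofNat_mem _ 3) ha) hb)

theorem tauQ_mul_self : tauQ * tauQ = 1 := by
  rw [tauQ, Matrix.mul_fin_three, Matrix.one_fin_three]
  norm_num

theorem sigmaQ_mul_self : sigmaQ * sigmaQ = 1 := by
  rw [sigmaQ, Matrix.smul_mul, Matrix.mul_smul, smul_smul, Matrix.mul_fin_three,
    Matrix.one_fin_three]
  norm_num

theorem mem_invariantSubalgebra_grpG_iff (p : MvPolynomial (Fin 3) ℂ) :
    p ∈ invariantSubalgebra (Rat.castHom ℂ) grpG ↔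
      substAlg (tauQ.map ((↑) : ℚ → ℂ)) p = p ∧ substAlg (sigmaQ.map ((↑) : ℚ → ℂ)) p = p := by
  rw [grpG, mem_invariantSubalgebra_closure_iff]
  refine ⟨fun h => ⟨h ⟨tauQ, tauQ, tauQ_mul_self, tauQ_mul_self⟩ (Or.inl rfl),
    h ⟨sigmaQ, sigmaQ, sigmaQ_mul_self, sigmaQ_mul_self⟩ (Or.inr rfl)⟩, ?_⟩
  rintro ⟨hτ, hσ⟩ u (hu | hu) <;> rw [hu]
  exacts [hτ, hσ]

noncomputable def conjMat : Matrix (Fin 3) (Fin 3) ℂ :=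
  !![1, 1/2, 1/2; 0, 1/2, -1/2; 0, 1/2, 1/2]

noncomputable def conjMatInv : Matrix (Fin 3) (Fin 3) ℂ := !![1, 0, -1; 0, 1, 1; 0, -1, 1]

theorem conjMat_mul_conjMatInv : conjMat * conjMatInv = 1 := by
  rw [conjMat, conjMatInv, Matrix.mul_fin_three, Matrix.one_fin_three]
  norm_num

theorem conjMatInv_mul_conjMat : conjMatInv * conjMat = 1 := by
  rw [conjMat, conjMatInv, Matrix.mul_fin_three, Matrix.one_fin_three]
  norm_num

theorem substAlg_conjMatInv :
    substAlg conjMatInv = aeval ![X 0 - X 2, X 1 + X 2, X 2 - X 1] := by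
  refine algHom_ext fun s => ?_
  fin_cases s <;> simp [substAlg_X, Fin.sum_univ_three, conjMatInv, sub_eq_add_neg, add_comm]

theorem conjMat_mul_permMatrix_swap_one_two :
    conjMat * (Equiv.swap 1 2).permMatrix ℂ = tauQ.map ((↑) : ℚ → ℂ) * conjMat := by
  ext i j
  fin_cases i <;> fin_cases j <;>
    simp [conjMat, tauQ, Matrix.mul_apply, Fin.sum_univ_succ, PEquiv.toMatrix_apply,
      Equiv.swap_apply_def] <;> norm_num

theorem conjMat_mul_permMatrix_swap_zero_one :
    conjMat * (Equiv.swap 0 1).permMatrix ℂ = sigmaQ.map ((↑) : ℚ → ℂ) * conjMat := by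
  ext i j
  fin_cases i <;> fin_cases j <;>
    simp [conjMat, sigmaQ, Matrix.mul_apply, Fin.sum_univ_succ, PEquiv.toMatrix_apply,
      Equiv.swap_apply_def] <;> norm_num

theorem isSymmetric_substAlg_conjMat_iff (p : MvPolynomial (Fin 3) ℂ) :
    (substAlg conjMat p).IsSymmetric ↔
      substAlg (tauQ.map ((↑) : ℚ → ℂ)) p = p ∧ substAlg (sigmaQ.map ((↑) : ℚ → ℂ)) p = p := by
  rw [isSymmetric_iff_rename_swap_castSucc_succ, Fin.forall_fin_two, and_comm]
  simp only [Fin.castSucc_zero, Fin.succ_zero_eq_one, Fin.castSucc_one, Fin.succ_one_eq_two,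
    ← substAlg_permMatrix]
  rw [substAlg_substAlg_eq_self_iff_of_mul_eq_mul conjMat_mul_conjMatInv
      conjMat_mul_permMatrix_swap_one_two,
    substAlg_substAlg_eq_self_iff_of_mul_eq_mul conjMat_mul_conjMatInv
      conjMat_mul_permMatrix_swap_zero_one]

section EsymmFinThree

variable {R : Type*} [CommSemiring R]

theorem esymm_fin_three_two : esymm (Fin 3) R 2 = X 0 * X 1 + X 0 * X 2 + X 1 * X 2 := by
  rw [esymm, show Finset.powersetCard 2 (Finset.univ : Finset (Fin 3)) =
    {{0, 1}, {0, 2}, {1, 2}} by decide]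
  simp (disch := decide) [Finset.sum_insert, Finset.prod_insert, add_assoc]

theorem esymm_fin_three_three : esymm (Fin 3) R 3 = X 0 * X 1 * X 2 := by
  rw [esymm, show Finset.powersetCard 3 (Finset.univ : Finset (Fin 3)) = {{0, 1, 2}} by decide]
  simp (disch := decide) [Finset.prod_insert, mul_assoc]

end EsymmFinThree

theorem substAlg_conjMatInv_esymm_one : substAlg conjMatInv (esymm (Fin 3) ℂ 1) = f1 := by
  simp only [substAlg_conjMatInv, esymm_one, Fin.sum_univ_three, map_add, aeval_X, f1,
    Matrix.cons_val]
  ring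

theorem substAlg_conjMatInv_esymm_two :
    substAlg conjMatInv (esymm (Fin 3) ℂ 2) = f1 ^ 2 - f2 := by
  simp only [substAlg_conjMatInv, esymm_fin_three_two, map_add, map_mul, aeval_X, f1, f2,
    Matrix.cons_val]
  ring

theorem substAlg_conjMatInv_esymm_three :
    3 * substAlg conjMatInv (esymm (Fin 3) ℂ 3) = f1 ^ 3 - 3 * f1 * f2 + 2 * f3 := by
  simp only [substAlg_conjMatInv, esymm_fin_three_three, map_mul, aeval_X, f1, f2, f3,
    Matrix.cons_val]
  ring

theorem map_adjoin_esymm_substAlg_conjMatInv :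
    (Algebra.adjoin ℂ (Set.range fun i : Fin 3 => esymm (Fin 3) ℂ (i + 1))).map
      (substAlg conjMatInv) = Algebra.adjoin ℂ {f1, f2, f3} := by
  have hrange : (Set.range fun i : Fin 3 => esymm (Fin 3) ℂ (i + 1)) =
      {esymm (Fin 3) ℂ 1, esymm (Fin 3) ℂ 2, esymm (Fin 3) ℂ 3} := by
    ext
    simp [Fin.exists_fin_succ, eq_comm]
  rw [← Algebra.adjoin_image, hrange, Set.image_insert_eq, Set.image_insert_eq,
    Set.image_singleton, substAlg_conjMatInv_esymm_one, substAlg_conjMatInv_esymm_two]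
  exact adjoin_triangular_eq substAlg_conjMatInv_esymm_three

/-- The invariant ring `ℂ[x_0,x_1,x_2]^G` of the group generated by `τ` and `σ` equals the
`ℂ`-subalgebra generated by `f_1, f_2, f_3`. -/
theorem invariants_G_eq_adjoin :
    (⨅ u ∈ grpG,
      AlgHom.equalizer
        (substAlg (((u : (Matrix (Fin 3) (Fin 3) ℚ)ˣ) : Matrix (Fin 3) (Fin 3) ℚ).map
          fun a : ℚ => (a : ℂ)))
        (AlgHom.id ℂ (MvPolynomial (Fin 3) ℂ))) =
      Algebra.adjoin ℂ {f1, f2, f3} := by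
  change invariantSubalgebra (Rat.castHom ℂ) grpG = _
  ext p
  rw [mem_invariantSubalgebra_grpG_iff, ← isSymmetric_substAlg_conjMat_iff,
    ← mem_symmetricSubalgebra, symmetricSubalgebra_eq_adjoin_esymm ℂ (Fintype.card_fin 3),
    ← map_adjoin_esymm_substAlg_conjMatInv,
    mem_map_substAlg_iff conjMat_mul_conjMatInv conjMatInv_mul_conjMat]
end

section
/- In the polynomial ring ℂ[x_0,x_1,x_2], the three polynomials f_1 := x_0 + x_2, f_2 := x_0² + x_1² + 2x_2², and f_3 := x_0³ + 3x_0x_2² + 3x_1²x_2 + x_2³ are algebraically independent over ℂ. -/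
/-!
Let `Φ` be the endomorphism of `ℂ[x₀, x₁, x₂]` sending `(x₀, x₁, x₂)` to `(x₂, f₁, f₂)`. It is
injective: it is the triangular automorphism `(x₂, x₀ + x₂, x₀² + x₁ + 2x₂²)` followed by
`x₁ ↦ x₁²`. Eliminating `x₀ = f₁ - x₂` and `x₁² = f₂ - x₀² - 2x₂²` gives `f₃ = Φ w`, where
`w = f3Preimage` is a cubic in `x₀` over `ℂ[x₁, x₂]` with leading coefficient `-12`. Hence `w` is
transcendental over `ℂ[x₁, x₂]`, so `(w, x₁, x₂)` is algebraically independent, and so is its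
image `(f₃, f₁, f₂)`.
-/

open MvPolynomial

theorem AlgebraicIndependent.update_pow {ι R A : Type*} [CommRing R] [CommRing A] [Algebra R A]
    [DecidableEq ι] {x : ι → A} (hx : AlgebraicIndependent R x) (i : ι) {k : ℕ} (hk : 0 < k) :
    AlgebraicIndependent R (Function.update x i (x i ^ k)) := by
  convert hx.polynomial_aeval_of_transcendental (f := Function.update (fun _ ↦ Polynomial.X) i
    (Polynomial.X ^ k)) fun j ↦ ?_ with j
  · obtain rfl | hj := eq_or_ne j i <;> simp [*]
  · obtain rfl | hj := eq_or_ne j i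
    · simpa using (Polynomial.transcendental_X R).pow hk
    · simpa [hj] using Polynomial.transcendental_X R

section

variable (R : Type*) [CommRing R]

theorem MvPolynomial.algebraicIndependent_cons_X_succ {n : ℕ} {p : MvPolynomial (Fin (n + 1)) R}
    (hp : Transcendental (MvPolynomial (Fin n) R) (finSuccEquiv R n p)) :
    AlgebraicIndependent R (Fin.cons p fun i : Fin n ↦ X i.succ) := by
  have hsum : AlgebraicIndependent R
      (Sum.elim (fun _ : Unit ↦ finSuccEquiv R n p) (Polynomial.C ∘ X)) :=
    (algebraicIndependent_X (Fin n) R).sumElim_comp (algebraicIndependent_unique_type_iff.2 hp)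
  have hinj : Function.Injective (Fin.cons (Sum.inl ()) Sum.inr : Fin (n + 1) → Unit ⊕ Fin n) :=
    Fin.cons_injective_iff.2 ⟨by simp, Sum.inr_injective⟩
  refine ((finSuccEquiv R n).toAlgHom.algebraicIndependent_iff (finSuccEquiv R n).injective).1 ?_
  convert hsum.comp _ hinj using 1
  simp only [Fin.comp_cons]
  congr 1
  funext i
  simp [finSuccEquiv_X_succ]

noncomputable def shear : MvPolynomial (Fin 3) R →ₐ[R] MvPolynomial (Fin 3) R :=
  aeval ![X 2, X 0 + X 2, X 0 ^ 2 + X 1 + 2 * X 2 ^ 2]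

theorem shear_injective : Function.Injective (shear R) := by
  let unshear : MvPolynomial (Fin 3) R →ₐ[R] MvPolynomial (Fin 3) R :=
    aeval ![X 1 - X 0, X 2 - (X 1 - X 0) ^ 2 - 2 * X 0 ^ 2, X 0]
  have h : unshear.comp (shear R) = AlgHom.id R _ := by
    refine algHom_ext fun i ↦ ?_
    fin_cases i
    · simp [unshear, shear]
    · simp [unshear, shear]
    · simp [unshear, shear, map_ofNat]; ring
  exact Function.LeftInverse.injective (g := unshear) fun p ↦ by
    rw [← AlgHom.comp_apply, h, AlgHom.id_apply]

end

noncomputable def f3Preimage : MvPolynomial (Fin 3) ℂ :=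
  -12 * X 0 ^ 3 + 12 * X 1 * X 0 ^ 2 + (3 * X 2 - 6 * X 1 ^ 2) * X 0 + X 1 ^ 3

theorem transcendental_finSuccEquiv_f3Preimage :
    Transcendental (MvPolynomial (Fin 2) ℂ) (finSuccEquiv ℂ 2 f3Preimage) := by
  have hlead : (-12 : MvPolynomial (Fin 2) ℂ) ≠ 0 := by norm_num
  have h1 : (1 : Fin 3) = (0 : Fin 2).succ := rfl
  have h2 : (2 : Fin 3) = (1 : Fin 2).succ := rfl
  have hcubic : finSuccEquiv ℂ 2 f3Preimage = Polynomial.C (-12) * Polynomial.X ^ 3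
      + Polynomial.C (12 * X 0) * Polynomial.X ^ 2
      + Polynomial.C (3 * X 1 - 6 * X 0 ^ 2) * Polynomial.X + Polynomial.C (X 0 ^ 3) := by
    simp only [f3Preimage, h1, h2, map_add, map_sub, map_mul, map_pow, map_neg, map_ofNat,
      finSuccEquiv_X_zero, finSuccEquiv_X_succ]
  rw [hcubic]
  refine Polynomial.transcendental _ ?_ ?_
  · rw [Polynomial.natDegree_cubic hlead]; norm_num
  · rw [Polynomial.leadingCoeff_cubic hlead]
    exact mem_nonZeroDivisors_of_ne_zero hlead

/-- The polynomials `f₁ = x₀ + x₂`, `f₂ = x₀² + x₁² + 2x₂²`, and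
`f₃ = x₀³ + 3x₀x₂² + 3x₁²x₂ + x₂³` are algebraically independent over `ℂ`. -/
theorem f1_f2_f3_algebraicIndependent :
    AlgebraicIndependent ℂ ![f1, f2, f3] := by
  let Φ := (aeval (Function.update X 1 (X 1 ^ 2) : Fin 3 → MvPolynomial (Fin 3) ℂ)).comp
    (shear ℂ)
  have hΦ : Function.Injective Φ :=
    (algebraicIndependent_iff_injective_aeval.1
      ((algebraicIndependent_X (Fin 3) ℂ).update_pow 1 two_pos)).comp (shear_injective ℂ)
  have hw : AlgebraicIndependent ℂ ![f3Preimage, X 1, X 2] := by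
    convert algebraicIndependent_cons_X_succ ℂ transcendental_finSuccEquiv_f3Preimage using 1
    funext i
    fin_cases i <;> rfl
  convert (hw.map' hΦ).comp ![1, 2, 0] (by decide)
  funext i
  fin_cases i <;> simp [Φ, shear, f1, f2, f3, f3Preimage, map_ofNat]
  ring
end
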